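/- arXiv:2311.18613 — 5 statements merged into one kernel-verified Lean document; each statement's English description precedes it below -/
import Mathlib

section
/- Let g, g* : [0,1]^d → ℝ^p be K-Lipschitz maps (with respect to the periodic Euclidean metric on the torus [0,1]^d/ℤ^d), and let U be the uniform distribution on [0,1]^d. If there exists u ∈ [0,1]^d with dist(g(u), g*([0,1]^d)) ≥ δ for some δ > 0 with δ/(2K) ≤ 1/2, then W₁(g_{#}U, g*_{#}U) ≥ c_d · δ^{d+1}/(2K)^d, where c_d > 0 depends only on d (one may take c_d = (volume of the d-dimensional unit ball)/2^{d+1}). -/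
open MeasureTheory Metric Set

/-- The periodic (torus) distance on `ℝ^d`, i.e. the distance on `ℝ^d/ℤ^d`. -/
noncomputable def torusDist {d : ℕ} (u v : EuclideanSpace ℝ (Fin d)) : ℝ :=
  ⨅ k : Fin d → ℤ,
    ‖u - v - (WithLp.equiv 2 (Fin d → ℝ)).symm (fun i => (k i : ℝ))‖

/-!
Test the Kantorovich dual against the 1-Lipschitz function `D = infDist · (gs '' Q)`, `Q` the unit
cube, which vanishes on the support of `gs_# U`. A map that is `K`-Lipschitz for the torus distance
is `K`-Lipschitz for the Euclidean one, so `D ∘ g ≥ δ / 2` on the ball of radius `r = δ / (2K)`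
around `u`. Since `r ≤ 1 / 2`, the orthant of this ball pointing from `u` towards the centre of the
cube lies in `Q`, and by reflection symmetry it carries a `2⁻ᵈ` fraction of the ball's volume
`vol(B₁) rᵈ`. Hence `∫_Q D ∘ g ≥ (δ / 2) vol(B₁) rᵈ / 2ᵈ`.
-/

section Euclidean

variable {d : ℕ}

lemma torusDist_le_norm_sub (u v : EuclideanSpace ℝ (Fin d)) : torusDist u v ≤ ‖u - v‖ := by
  have hbdd : BddBelow (range fun k : Fin d → ℤ =>
      ‖u - v - (WithLp.equiv 2 (Fin d → ℝ)).symm (fun i => (k i : ℝ))‖) :=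
    ⟨0, by rintro _ ⟨k, rfl⟩; exact norm_nonneg _⟩
  simpa [torusDist, ← Pi.zero_def] using ciInf_le hbdd 0

lemma lipschitzWith_of_norm_sub_le_mul_torusDist {E : Type*} [SeminormedAddCommGroup E] {K : ℝ}
    (hK : 0 ≤ K) {f : EuclideanSpace ℝ (Fin d) → E}
    (hf : ∀ u v, ‖f u - f v‖ ≤ K * torusDist u v) : LipschitzWith K.toNNReal f :=
  LipschitzWith.of_dist_le_mul fun u v => by
    rw [dist_eq_norm, dist_eq_norm, Real.coe_toNNReal K hK]
    exact (hf u v).trans (mul_le_mul_of_nonneg_left (torusDist_le_norm_sub u v) hK)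

abbrev unitCube (d : ℕ) : Set (EuclideanSpace ℝ (Fin d)) :=
  WithLp.ofLp ⁻¹' Set.univ.pi fun _ => Icc 0 1

lemma isCompact_unitCube : IsCompact (unitCube d) :=
  (PiLp.homeomorph 2 _).isCompact_preimage.2 (isCompact_univ_pi fun _ => isCompact_Icc)

noncomputable def coordReflection (s : Fin d → Bool) :
    EuclideanSpace ℝ (Fin d) ≃ₗᵢ[ℝ] EuclideanSpace ℝ (Fin d) :=
  LinearIsometryEquiv.piLpCongrRight 2
    fun i => if s i then LinearIsometryEquiv.refl ℝ ℝ else LinearIsometryEquiv.neg ℝ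

lemma coordReflection_apply (s : Fin d → Bool) (w : EuclideanSpace ℝ (Fin d)) (i : Fin d) :
    coordReflection s w i = if s i then w i else -w i := by
  simp only [coordReflection, LinearIsometryEquiv.piLpCongrRight_apply]
  split <;> simp

def nonnegOrthant (d : ℕ) : Set (EuclideanSpace ℝ (Fin d)) := {w | ∀ i, 0 ≤ w i}

lemma mem_nonnegOrthant {w : EuclideanSpace ℝ (Fin d)} : w ∈ nonnegOrthant d ↔ ∀ i, 0 ≤ w i :=
  Iff.rfl

lemma measurableSet_nonnegOrthant : MeasurableSet (nonnegOrthant d) := by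
  unfold nonnegOrthant
  measurability

lemma volume_ball_zero_le_two_pow_mul_volume_ball_inter_nonnegOrthant (r : ℝ) :
    volume (ball (0 : EuclideanSpace ℝ (Fin d)) r) ≤
      2 ^ d * volume (ball 0 r ∩ nonnegOrthant d) := by
  set A := ball (0 : EuclideanSpace ℝ (Fin d)) r ∩ nonnegOrthant d
  have hA : MeasurableSet A := measurableSet_ball.inter measurableSet_nonnegOrthant
  have hcover : ball 0 r ⊆ ⋃ s, coordReflection s ⁻¹' A := fun w hw => by
    refine mem_iUnion.2 ⟨fun i => decide (0 ≤ w i), by simpa using hw,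
      mem_nonnegOrthant.2 fun i => ?_⟩
    rw [coordReflection_apply]
    by_cases hwi : 0 ≤ w i
    · simp [hwi]
    · simp [hwi]
      linarith
  calc volume (ball (0 : EuclideanSpace ℝ (Fin d)) r) ≤ ∑ s, volume (coordReflection s ⁻¹' A) :=
        (measure_mono hcover).trans (measure_iUnion_fintype_le _ _)
    _ = 2 ^ d * volume A := by
        simp [(coordReflection _).measurePreserving.measure_preimage hA.nullMeasurableSet]

lemma volume_ball_le_two_pow_mul_volume_ball_inter_unitCube {u : EuclideanSpace ℝ (Fin d)}
    (hu : u ∈ unitCube d) {r : ℝ} (hr : r ≤ 1 / 2) :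
    volume (ball u r) ≤ 2 ^ d * volume (ball u r ∩ unitCube d) := by
  -- `Φ` maps the orthant at `u` pointing towards the centre of the cube onto `nonnegOrthant d`.
  set Φ := fun z => coordReflection (fun i => decide (u i ≤ 1 / 2)) (z - u)
  have hΦ : MeasurePreserving Φ volume volume :=
    (coordReflection _).measurePreserving.comp (measurePreserving_sub_right volume u)
  have hball : Φ ⁻¹' ball 0 r = ball u r := by
    ext z
    simp only [Φ, mem_preimage, mem_ball, dist_eq_norm, sub_zero, LinearIsometryEquiv.norm_map]
  have hsub : Φ ⁻¹' (ball 0 r ∩ nonnegOrthant d) ⊆ ball u r ∩ unitCube d := by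
    rintro z ⟨hz, hnonneg⟩
    refine ⟨hball ▸ hz, fun i _ => ?_⟩
    have hΦi : Φ z i = if u i ≤ 1 / 2 then z i - u i else -(z i - u i) := by
      simp only [Φ, coordReflection_apply, PiLp.sub_apply, decide_eq_true_eq]
    have hΦi_lt : Φ z i < 1 / 2 :=
      ((le_abs_self _).trans (PiLp.norm_apply_le (Φ z) i)).trans_lt
        ((mem_ball_zero_iff.1 hz).trans_le hr)
    have hui := hu i (mem_univ i)
    have := mem_nonnegOrthant.1 hnonneg i
    split_ifs at hΦi <;> constructor <;> linarith [hui.1, hui.2]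
  have hA : MeasurableSet (ball 0 r ∩ nonnegOrthant d) :=
    measurableSet_ball.inter measurableSet_nonnegOrthant
  calc volume (ball u r) = volume (ball (0 : EuclideanSpace ℝ (Fin d)) r) := by
        rw [← hball, hΦ.measure_preimage measurableSet_ball.nullMeasurableSet]
    _ ≤ 2 ^ d * volume (ball 0 r ∩ nonnegOrthant d) :=
        volume_ball_zero_le_two_pow_mul_volume_ball_inter_nonnegOrthant r
    _ = 2 ^ d * volume (Φ ⁻¹' (ball 0 r ∩ nonnegOrthant d)) := by
        rw [hΦ.measure_preimage hA.nullMeasurableSet]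
    _ ≤ 2 ^ d * volume (ball u r ∩ unitCube d) := by gcongr

lemma le_measureReal_ball_inter_unitCube {u : EuclideanSpace ℝ (Fin d)} (hu : u ∈ unitCube d)
    {r : ℝ} (hr₀ : 0 < r) (hr : r ≤ 1 / 2) :
    (volume (ball (0 : EuclideanSpace ℝ (Fin d)) 1)).toReal * r ^ d / 2 ^ d ≤
      volume.real (ball u r ∩ unitCube d) := by
  have h := volume_ball_le_two_pow_mul_volume_ball_inter_unitCube hu hr
  rw [Measure.addHaar_ball_of_pos _ _ hr₀, finrank_euclideanSpace_fin] at h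
  have h' := ENNReal.toReal_mono (by finiteness) h
  rw [div_le_iff₀ (by positivity), measureReal_def]
  simpa [ENNReal.toReal_mul, ENNReal.toReal_ofReal, hr₀.le, mul_comm] using h'

end Euclidean

section Kantorovich

variable {X E : Type*} [MeasurableSpace X] [PseudoMetricSpace E] [MeasurableSpace E]
  [BorelSpace E] {μ : Measure X} {s : Set X} {f g : X → E}

lemma bddAbove_lipschitz_integral_map_sub [TopologicalSpace X] [T2Space X]
    [OpensMeasurableSpace X] [IsFiniteMeasureOnCompacts μ] (hs : IsCompact s)
    (hf : Continuous f) (hg : Continuous g) :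
    BddAbove {r : ℝ | ∃ D : E → ℝ, LipschitzWith 1 D ∧
      r = ∫ x, D x ∂(μ.restrict s).map f - ∫ x, D x ∂(μ.restrict s).map g} := by
  obtain ⟨M, hM⟩ := hs.bddAbove_image (continuous_dist.comp (hf.prodMk hg)).continuousOn
  refine ⟨μ.real s * M, ?_⟩
  rintro _ ⟨D, hD, rfl⟩
  have hDf : IntegrableOn (fun x => D (f x)) s μ :=
    (hD.continuous.comp hf).continuousOn.integrableOn_compact hs
  have hDg : IntegrableOn (fun x => D (g x)) s μ :=
    (hD.continuous.comp hg).continuousOn.integrableOn_compact hs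
  rw [integral_map hf.aemeasurable hD.continuous.aestronglyMeasurable,
    integral_map hg.aemeasurable hD.continuous.aestronglyMeasurable, ← integral_sub hDf hDg,
    ← smul_eq_mul, ← setIntegral_const]
  refine setIntegral_mono_on (hDf.sub hDg) (integrableOn_const hs.measure_lt_top.ne)
    hs.measurableSet fun x hx => ?_
  calc D (f x) - D (g x) ≤ dist (f x) (g x) :=
        (le_abs_self _).trans (by simpa [Real.dist_eq] using hD.dist_le_mul (f x) (g x))
    _ ≤ M := hM ⟨x, hx, rfl⟩

lemma integral_infDist_image_map_sub (hf : AEMeasurable f (μ.restrict s))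
    (hg : AEMeasurable g (μ.restrict s)) :
    ∫ y, infDist y (g '' s) ∂(μ.restrict s).map f - ∫ y, infDist y (g '' s) ∂(μ.restrict s).map g =
      ∫ x in s, infDist (f x) (g '' s) ∂μ := by
  rw [integral_map hf (continuous_infDist_pt _).aestronglyMeasurable,
    integral_map hg (continuous_infDist_pt _).aestronglyMeasurable,
    setIntegral_eq_zero_of_forall_eq_zero fun x hx => infDist_zero_of_mem (mem_image_of_mem g hx),
    sub_zero]

end Kantorovich

/-- If the support of `g_# U` contains a point at distance at least `δ` from the
support of `g*_# U`, then the Wasserstein distance (Kantorovich dual form) between the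
pushforwards of the uniform measure on the cube is at least `c_d δ^{d+1}/(2K)^d`. -/
theorem wasserstein_lower_bound_far_point (d p : ℕ) (K δ : ℝ) (hK : 0 < K) (hδ : 0 < δ)
    (hsmall : δ / (2 * K) ≤ 1 / 2)
    (g gs : EuclideanSpace ℝ (Fin d) → EuclideanSpace ℝ (Fin p))
    (hg : ∀ u v, ‖g u - g v‖ ≤ K * torusDist u v)
    (hgs : ∀ u v, ‖gs u - gs v‖ ≤ K * torusDist u v)
    (u : EuclideanSpace ℝ (Fin d))
    (hu : WithLp.ofLp u ∈ Set.univ.pi fun _ : Fin d => Icc (0 : ℝ) 1)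
    (hfar : δ ≤ infDist (g u) (gs '' (WithLp.ofLp ⁻¹' (Set.univ.pi fun _ : Fin d => Icc (0 : ℝ) 1)))) :
    ((volume (ball (0 : EuclideanSpace ℝ (Fin d)) 1)).toReal / 2 ^ (d + 1)) *
        δ ^ (d + 1) / (2 * K) ^ d ≤
      sSup {r : ℝ | ∃ D : EuclideanSpace ℝ (Fin p) → ℝ, LipschitzWith 1 D ∧
        r = (∫ x, D x
              ∂(Measure.map g
                (volume.restrict (WithLp.ofLp ⁻¹' (Set.univ.pi fun _ : Fin d => Icc (0 : ℝ) 1))))) -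
            ∫ x, D x
              ∂(Measure.map gs
                (volume.restrict (WithLp.ofLp ⁻¹' (Set.univ.pi fun _ : Fin d => Icc (0 : ℝ) 1))))} := by
  have hgL := lipschitzWith_of_norm_sub_le_mul_torusDist hK.le hg
  have hgsL := lipschitzWith_of_norm_sub_le_mul_torusDist hK.le hgs
  set T := gs '' unitCube d
  set r := δ / (2 * K) with hr
  have hr₀ : 0 < r := by positivity
  have hfar_ball : ∀ z ∈ ball u r ∩ unitCube d, δ / 2 ≤ infDist (g z) T := fun z hz => by
    have hgz : dist (g u) (g z) ≤ K * r := by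
      simpa [Real.coe_toNNReal K hK.le, dist_comm] using
        hgL.dist_le_mul_of_le (mem_ball.1 hz.1).le
    have hKr : K * r = δ / 2 := by rw [hr]; field_simp
    linarith [infDist_le_infDist_add_dist (s := T) (x := g u) (y := g z)]
  have hint : IntegrableOn (fun x => infDist (g x) T) (unitCube d) :=
    ((continuous_infDist_pt T).comp hgL.continuous).continuousOn.integrableOn_compact
      isCompact_unitCube
  calc _ = δ / 2 * ((volume (ball (0 : EuclideanSpace ℝ (Fin d)) 1)).toReal * r ^ d / 2 ^ d) := by
        rw [hr, div_pow]
        field_simp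
        ring
    _ ≤ δ / 2 * volume.real (ball u r ∩ unitCube d) := by
        gcongr
        exact le_measureReal_ball_inter_unitCube hu hr₀ hsmall
    _ ≤ ∫ x in ball u r ∩ unitCube d, infDist (g x) T := by
        rw [mul_comm, ← smul_eq_mul]
        exact setIntegral_ge_of_const_le (measurableSet_ball.inter isCompact_unitCube.measurableSet)
          (measure_inter_lt_top_of_left_ne_top measure_ball_lt_top.ne).ne hfar_ball
          (hint.mono_set inter_subset_right)
    _ ≤ ∫ x in unitCube d, infDist (g x) T :=
        setIntegral_mono_set hint (ae_of_all _ fun _ => infDist_nonneg)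
          inter_subset_right.eventuallyLE
    _ = _ := (integral_infDist_image_map_sub hgL.continuous.aemeasurable
          hgsL.continuous.aemeasurable).symm
    _ ≤ _ := le_csSup (bddAbove_lipschitz_integral_map_sub isCompact_unitCube hgL.continuous
          hgsL.continuous) ⟨_, lipschitz_infDist_pt T, rfl⟩
end

section
/- Let X : ℝ^d → ℝ^p be K-Lipschitz with K ≥ 1 and nowhere vanishing, and define L(u) = X(u)/‖X(u)‖. Then for every α ∈ [0,1] and all u, v ∈ ℝ^d, ‖L(u) − L(v)‖ ≤ 8K · min(‖X(u)‖, ‖X(v)‖)^{−α} · ‖u − v‖^{α}. -/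
lemma unit_diff_bound {E : Type*} [NormedAddCommGroup E] [NormedSpace ℝ E]
    (a b : E) (ha : a ≠ 0) (hb : b ≠ 0) :
    ‖‖a‖⁻¹ • a - ‖b‖⁻¹ • b‖ ≤ 2 * ‖a - b‖ / ‖a‖ := by
  have ha' : (0:ℝ) < ‖a‖ := norm_pos_iff.mpr ha
  have hb' : (0:ℝ) < ‖b‖ := norm_pos_iff.mpr hb
  have key : ‖a‖⁻¹ • a - ‖b‖⁻¹ • b = ‖a‖⁻¹ • (a - b) + (‖a‖⁻¹ - ‖b‖⁻¹) • b := by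
    rw [smul_sub, sub_smul]; abel
  rw [key]
  have h1 : ‖‖a‖⁻¹ • (a - b)‖ = ‖a - b‖ / ‖a‖ := by
    rw [norm_smul, norm_inv, norm_norm]; ring
  have h2 : ‖(‖a‖⁻¹ - ‖b‖⁻¹) • b‖ ≤ ‖a - b‖ / ‖a‖ := by
    rw [norm_smul, Real.norm_eq_abs]
    have : ‖a‖⁻¹ - ‖b‖⁻¹ = (‖b‖ - ‖a‖) / (‖a‖ * ‖b‖) := by
      field_simp
    rw [this, abs_div, abs_mul, abs_norm, abs_norm]
    have h3 : |‖b‖ - ‖a‖| ≤ ‖a - b‖ := by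
      rw [abs_sub_comm]; exact abs_norm_sub_norm_le a b
    rw [div_mul_eq_mul_div, div_le_div_iff₀ (by positivity) ha']
    calc |‖b‖ - ‖a‖| * ‖b‖ * ‖a‖ ≤ ‖a - b‖ * ‖b‖ * ‖a‖ := by
          gcongr
      _ = ‖a - b‖ * (‖a‖ * ‖b‖) := by ring
  calc ‖‖a‖⁻¹ • (a - b) + (‖a‖⁻¹ - ‖b‖⁻¹) • b‖
      ≤ ‖‖a‖⁻¹ • (a - b)‖ + ‖(‖a‖⁻¹ - ‖b‖⁻¹) • b‖ := norm_add_le _ _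
    _ ≤ ‖a - b‖ / ‖a‖ + ‖a - b‖ / ‖a‖ := by rw [h1]; gcongr
    _ = 2 * ‖a - b‖ / ‖a‖ := by ring

/-- Hölder regularity of the normalized direction field `L = X/‖X‖` of a Lipschitz,
nowhere vanishing vector field `X`. -/
theorem direction_field_holder (d p : ℕ) (K : ℝ) (hK : 1 ≤ K)
    (X : EuclideanSpace ℝ (Fin d) → EuclideanSpace ℝ (Fin p))
    (hLip : ∀ u v, ‖X u - X v‖ ≤ K * ‖u - v‖)
    (hne : ∀ u, X u ≠ 0)
    (L : EuclideanSpace ℝ (Fin d) → EuclideanSpace ℝ (Fin p))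
    (hL : ∀ u, L u = ‖X u‖⁻¹ • X u) :
    ∀ α ∈ Set.Icc (0 : ℝ) 1, ∀ u v,
      ‖L u - L v‖ ≤ 8 * K * (min ‖X u‖ ‖X v‖) ^ (-α) * ‖u - v‖ ^ α := by
  rintro α ⟨hα0, hα1⟩ u v
  have hK0 : (0:ℝ) < K := lt_of_lt_of_le one_pos hK
  set δ : ℝ := min ‖X u‖ ‖X v‖ with hδdef
  have hδ : 0 < δ := lt_min (norm_pos_iff.mpr (hne u)) (norm_pos_iff.mpr (hne v))
  set t : ℝ := ‖u - v‖ with htdef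
  have ht0 : 0 ≤ t := norm_nonneg _
  by_cases htz : t = 0
  · have huv : u = v := by
      have := sub_eq_zero.mp (norm_eq_zero.mp htz)
      exact this
    rw [huv, sub_self, norm_zero]
    positivity
  have ht : 0 < t := lt_of_le_of_ne ht0 (Ne.symm htz)
  -- basic bounds on L
  have hLub : ‖L u - L v‖ ≤ 2 := by
    have h1 : ‖L u‖ = 1 := by
      rw [hL, norm_smul, norm_inv, norm_norm,
        inv_mul_cancel₀ (norm_ne_zero_iff.mpr (hne u))]
    have h2 : ‖L v‖ = 1 := by
      rw [hL, norm_smul, norm_inv, norm_norm,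
        inv_mul_cancel₀ (norm_ne_zero_iff.mpr (hne v))]
    calc ‖L u - L v‖ ≤ ‖L u‖ + ‖L v‖ := norm_sub_le _ _
      _ = 2 := by rw [h1, h2]; norm_num
  have hLq : ‖L u - L v‖ ≤ 2 * K * t / δ := by
    have := unit_diff_bound (X u) (X v) (hne u) (hne v)
    rw [← hL u, ← hL v] at this
    calc ‖L u - L v‖ ≤ 2 * ‖X u - X v‖ / ‖X u‖ := this
      _ ≤ 2 * (K * t) / δ :=
          div_le_div₀ (by positivity) (by nlinarith [hLip u v]) hδ (min_le_left _ _)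
      _ = 2 * K * t / δ := by ring
  by_cases hcase : δ ≤ 4 * K * t
  · -- trivial bound suffices
    have hrpow : (8:ℝ) * K * (4 * K)⁻¹ ≤ 8 * K * δ ^ (-α) * t ^ α := by
      have h1 : (δ / (4 * K)) ^ α ≤ t ^ α := by
        apply Real.rpow_le_rpow (by positivity) _ hα0
        rw [div_le_iff₀ (by positivity)]
        linarith [hcase]
      have h2 : δ ^ (-α) * (δ / (4 * K)) ^ α = (4 * K) ^ (-α) := by
        rw [Real.div_rpow hδ.le (by positivity), Real.rpow_neg hδ.le,
          Real.rpow_neg (by positivity : (0:ℝ) ≤ 4 * K)]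
        field_simp
      have h3 : (4 * K) ^ (-(1:ℝ)) ≤ (4 * K) ^ (-α) := by
        apply Real.rpow_le_rpow_of_exponent_le (by linarith) (by linarith)
      calc (8:ℝ) * K * (4 * K)⁻¹ = 8 * K * (4 * K) ^ (-(1:ℝ)) := by
            rw [Real.rpow_neg_one]
        _ ≤ 8 * K * (4 * K) ^ (-α) := by gcongr
        _ = 8 * K * (δ ^ (-α) * (δ / (4 * K)) ^ α) := by rw [h2]
        _ ≤ 8 * K * (δ ^ (-α) * t ^ α) := by gcongr
        _ = 8 * K * δ ^ (-α) * t ^ α := by ring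
    have heq : (8:ℝ) * K * (4 * K)⁻¹ = 2 := by field_simp; ring
    have h2' : (2:ℝ) ≤ 8 * K * δ ^ (-α) * t ^ α := by rw [← heq]; exact hrpow
    linarith
  · push_neg at hcase
    have htδ : t ≤ δ := by nlinarith
    have key : t / δ ≤ 4 * (δ ^ (-α) * t ^ α) := by
      have e1 : t ^ α * t ^ (1 - α) = t := by
        rw [← Real.rpow_add ht]; norm_num
      have e2 : δ ^ (-α) * δ ^ (α - 1) = δ⁻¹ := by
        rw [← Real.rpow_add hδ, ← Real.rpow_neg_one δ]; congr 1; ring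
      have e3 : t ^ (1 - α) * δ ^ (α - 1) ≤ 1 := by
        have h4 : t ^ (1 - α) ≤ δ ^ (1 - α) :=
          Real.rpow_le_rpow ht0 htδ (by linarith)
        have h5 : δ ^ (1 - α) * δ ^ (α - 1) = 1 := by
          rw [← Real.rpow_add hδ]; norm_num
        calc t ^ (1 - α) * δ ^ (α - 1) ≤ δ ^ (1 - α) * δ ^ (α - 1) := by
              gcongr
          _ = 1 := h5
      have hpos : 0 ≤ δ ^ (-α) * t ^ α := by positivity
      have e4 : (δ ^ (-α) * t ^ α) * (t ^ (1 - α) * δ ^ (α - 1)) = t / δ := by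
        calc (δ ^ (-α) * t ^ α) * (t ^ (1 - α) * δ ^ (α - 1))
            = (t ^ α * t ^ (1 - α)) * (δ ^ (-α) * δ ^ (α - 1)) := by ring
          _ = t * δ⁻¹ := by rw [e1, e2]
          _ = t / δ := (div_eq_mul_inv t δ).symm
      rw [← e4]
      calc (δ ^ (-α) * t ^ α) * (t ^ (1 - α) * δ ^ (α - 1))
          ≤ (δ ^ (-α) * t ^ α) * 1 := mul_le_mul_of_nonneg_left e3 hpos
        _ ≤ 4 * (δ ^ (-α) * t ^ α) := by linarith
    calc ‖L u - L v‖ ≤ 2 * K * t / δ := hLq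
      _ = 2 * K * (t / δ) := by ring
      _ ≤ 2 * K * (4 * (δ ^ (-α) * t ^ α)) := by gcongr
      _ = 8 * K * δ ^ (-α) * t ^ α := by ring
end

section
/- Let η > 0 with m = ⌊η⌋, and let F : ℝ^p → ℝ^k be m-times continuously differentiable with ‖∇^i F(x)‖ ≤ 1 for all x and all 0 ≤ i ≤ m, and with ∇^m F being (η − m)-Hölder with constant 1, i.e. ‖∇^m F(x) − ∇^m F(y)‖ ≤ ‖x−y‖^{η−m}. Let γ : [0,1] → ℝ^p be a piecewise C¹ path with γ(0) = x₂ and γ(1) = x₁. Then ‖F(x₁) − Σ_{i=0}^{m} ∇^i F(x₂)·(x₁ − x₂)^{i}/i!‖ ≤ (∫₀¹ ‖γ'(t)‖ dt)^{η}. -/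
/-!
Restricting `F` to the segment `t ↦ x₂ + t • (x₁ - x₂)` reduces the claim to a function `g` of one
real variable on `[0, 1]`. Its Taylor remainder of order `m` is at most the oscillation of `g⁽ᵐ⁾`
on `[0, 1]` divided by `m!`: the derivative in `t` of the order-`(m-1)` Taylor polynomial at `t`
plus `(1 - t)ᵐ / m! • g⁽ᵐ⁾(0)` is `(1 - t)ᵐ⁻¹ / (m-1)! • (g⁽ᵐ⁾(t) - g⁽ᵐ⁾(0))`, so the fencing
theorem applies with an explicit primitive of the bound. Hölder continuity of `Dᵐ F` bounds the
oscillation by `‖x₁ - x₂‖ ^ η`, and `‖x₁ - x₂‖` is at most the length of any path from `x₂` to `x₁`.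
-/

open Set Finset Nat

theorem iteratedDeriv_comp_add_smul {𝕜 E F : Type*} [NontriviallyNormedField 𝕜]
    [NormedAddCommGroup E] [NormedSpace 𝕜 E] [NormedAddCommGroup F] [NormedSpace 𝕜 F]
    {f : E → F} {n : WithTop ℕ∞} (hf : ContDiff 𝕜 n f) (x v : E) (t : 𝕜) {i : ℕ}
    (hi : i ≤ n) :
    iteratedDeriv i (fun s : 𝕜 => f (x + s • v)) t =
      iteratedFDeriv 𝕜 i f (x + t • v) (fun _ => v) := by
  have hshift : ContDiff 𝕜 n (fun z => f (x + z)) := hf.comp (contDiff_const.add contDiff_id)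
  have hline : (fun s : 𝕜 => f (x + s • v)) =
      (fun z => f (x + z)) ∘ ContinuousLinearMap.toSpanSingleton 𝕜 v := rfl
  rw [iteratedDeriv_eq_iteratedFDeriv, hline,
    (ContinuousLinearMap.toSpanSingleton 𝕜 v).iteratedFDeriv_comp_right hshift t hi,
    iteratedFDeriv_comp_add_left]
  simp

theorem norm_sub_le_integral_norm_of_hasDerivAt {E : Type*} [NormedAddCommGroup E]
    [NormedSpace ℝ E] [CompleteSpace E] {γ γ' : ℝ → E} {a b : ℝ} (hab : a ≤ b)
    (hγ : ∀ t ∈ Icc a b, HasDerivAt γ (γ' t) t)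
    (hγ' : IntervalIntegrable γ' MeasureTheory.volume a b) :
    ‖γ b - γ a‖ ≤ ∫ t in a..b, ‖γ' t‖ := by
  rw [← intervalIntegral.integral_eq_sub_of_hasDerivAt (by rwa [uIcc_of_le hab]) hγ']
  exact intervalIntegral.norm_integral_le_integral_norm hab

theorem hasDerivAt_factorial_inv_mul_sub_pow (b t : ℝ) (k : ℕ) :
    HasDerivAt (fun s => ((k + 1)! : ℝ)⁻¹ * (b - s) ^ (k + 1))
      (-((k ! : ℝ)⁻¹ * (b - t) ^ k)) t := by
  refine ((monomial_has_deriv_aux t b k).const_mul ((k + 1)! : ℝ)⁻¹).congr_deriv ?_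
  push_cast [factorial_succ]
  field_simp

section OneVariable

variable {E : Type*} [NormedAddCommGroup E] [NormedSpace ℝ E]

theorem hasDerivAt_taylorWithinEval_univ {g : ℝ → E} {n : ℕ} (hg : ContDiff ℝ (n + 1) g)
    (x t : ℝ) :
    HasDerivAt (fun s => taylorWithinEval g n univ s x)
      (((n ! : ℝ)⁻¹ * (x - t) ^ n) • iteratedDeriv (n + 1) g t) t := by
  have hdiff : DifferentiableWithinAt ℝ (iteratedDerivWithin n g univ) univ t := by
    rw [iteratedDerivWithin_univ]
    exact (hg.differentiable_iteratedDeriv n (by norm_cast; omega)).differentiableAt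
      |>.differentiableWithinAt
  simpa only [hasDerivWithinAt_univ, iteratedDerivWithin_univ] using
    hasDerivWithinAt_taylorWithinEval uniqueDiffOn_univ Filter.univ_mem (mem_univ t) subset_rfl
      (hg.of_le (by norm_cast; omega)).contDiffOn hdiff

theorem norm_sub_taylorWithinEval_le_of_norm_iteratedDeriv_sub_le {g : ℝ → E} {n : ℕ}
    {a b C : ℝ} (hab : a ≤ b) (hg : ContDiff ℝ n g)
    (hC : ∀ t ∈ Icc a b, ‖iteratedDeriv n g t - iteratedDeriv n g a‖ ≤ C) :
    ‖g b - taylorWithinEval g n univ a b‖ ≤ C * (b - a) ^ n / n ! := by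
  obtain _ | k := n
  · simpa using hC b ⟨hab, le_rfl⟩
  set D := iteratedDeriv (k + 1) g a
  set ψ : ℝ → E := fun t =>
    taylorWithinEval g k univ t b + (((k + 1)! : ℝ)⁻¹ * (b - t) ^ (k + 1)) • D
  have hψa : ψ a = taylorWithinEval g (k + 1) univ a b := by
    simp [ψ, D, taylorWithinEval_succ, factorial_succ]
  have hψb : ψ b = g b := by simp [ψ]
  have hψ : ∀ t, HasDerivAt ψ
      (((k ! : ℝ)⁻¹ * (b - t) ^ k) • (iteratedDeriv (k + 1) g t - D)) t := by
    intro t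
    refine ((hasDerivAt_taylorWithinEval_univ hg b t).add
      ((hasDerivAt_factorial_inv_mul_sub_pow b t k).smul_const D)).congr_deriv ?_
    rw [smul_sub, neg_smul, ← sub_eq_add_neg]
  have hB : ∀ t, HasDerivAt (fun s => C * (((k + 1)! : ℝ)⁻¹ * (b - a) ^ (k + 1)
      - ((k + 1)! : ℝ)⁻¹ * (b - s) ^ (k + 1))) (C * ((k ! : ℝ)⁻¹ * (b - t) ^ k)) t := by
    intro t
    simpa using ((hasDerivAt_factorial_inv_mul_sub_pow b t k).const_sub _).const_mul C
  have hψ'_le : ∀ t ∈ Ico a b,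
      ‖((k ! : ℝ)⁻¹ * (b - t) ^ k) • (iteratedDeriv (k + 1) g t - D)‖ ≤
        C * ((k ! : ℝ)⁻¹ * (b - t) ^ k) := by
    rintro t ⟨hat, htb⟩
    rw [norm_smul, Real.norm_of_nonneg (by have := sub_nonneg.2 htb.le; positivity), mul_comm]
    gcongr
    exact hC t ⟨hat, htb.le⟩
  calc ‖g b - taylorWithinEval g (k + 1) univ a b‖ = ‖ψ b - ψ a‖ := by rw [hψa, hψb]
    _ ≤ C * (((k + 1)! : ℝ)⁻¹ * (b - a) ^ (k + 1) - ((k + 1)! : ℝ)⁻¹ * (b - b) ^ (k + 1)) :=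
      image_norm_le_of_norm_deriv_right_le_deriv_boundary (f := fun t => ψ t - ψ a)
        (fun t _ => ((hψ t).sub_const _).continuousAt.continuousWithinAt)
        (fun t _ => ((hψ t).sub_const _).hasDerivWithinAt) (by simp) hB hψ'_le ⟨hab, le_rfl⟩
    _ = C * (b - a) ^ (k + 1) / (k + 1)! := by
      rw [sub_self, zero_pow (succ_ne_zero k), mul_zero, sub_zero]
      ring

theorem norm_sub_taylor_le_of_norm_iteratedFDeriv_sub_le {F : Type*} [NormedAddCommGroup F]
    [NormedSpace ℝ F] {f : E → F} {m : ℕ} {C ε : ℝ} (hf : ContDiff ℝ m f) (hC : 0 ≤ C)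
    (hε : 0 ≤ ε) (x : E)
    (hHol : ∀ z, ‖iteratedFDeriv ℝ m f z - iteratedFDeriv ℝ m f x‖ ≤ C * ‖z - x‖ ^ ε) (y : E) :
    ‖f y - ∑ i ∈ range (m + 1), (i ! : ℝ)⁻¹ • iteratedFDeriv ℝ i f x (fun _ => y - x)‖ ≤
      C * ‖y - x‖ ^ ε * ‖y - x‖ ^ m / m ! := by
  set v := y - x
  set g : ℝ → F := fun s => f (x + s • v)
  have hg : ContDiff ℝ m g := hf.comp (contDiff_const.add (contDiff_id.smul contDiff_const))
  have hderiv : ∀ i ≤ m, ∀ t,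
      iteratedDeriv i g t = iteratedFDeriv ℝ i f (x + t • v) (fun _ => v) :=
    fun i hi t => iteratedDeriv_comp_add_smul hf x v t (by exact_mod_cast hi)
  have htaylor : taylorWithinEval g m univ 0 1 =
      ∑ i ∈ range (m + 1), (i ! : ℝ)⁻¹ • iteratedFDeriv ℝ i f x (fun _ => v) := by
    rw [taylor_within_apply]
    refine Finset.sum_congr rfl fun i hi => ?_
    rw [iteratedDerivWithin_univ, hderiv i (Nat.lt_succ_iff.mp (mem_range.mp hi))]
    simp
  have hosc : ∀ t ∈ Icc (0 : ℝ) 1,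
      ‖iteratedDeriv m g t - iteratedDeriv m g 0‖ ≤ C * ‖v‖ ^ ε * ‖v‖ ^ m := by
    rintro t ⟨ht₀, ht₁⟩
    rw [hderiv m le_rfl, hderiv m le_rfl, zero_smul, add_zero, ← sub_apply]
    calc _ ≤ ‖iteratedFDeriv ℝ m f (x + t • v) - iteratedFDeriv ℝ m f x‖ * ‖v‖ ^ m :=
          ContinuousMultilinearMap.le_opNorm_mul_pow_of_le _ (pi_norm_const_le v)
      _ ≤ C * ‖t • v‖ ^ ε * ‖v‖ ^ m := by
          gcongr
          simpa using hHol (x + t • v)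
      _ ≤ C * ‖v‖ ^ ε * ‖v‖ ^ m := by
          gcongr
          rw [norm_smul, Real.norm_of_nonneg ht₀]
          exact mul_le_of_le_one_left (norm_nonneg v) ht₁
  simpa [g, v, htaylor] using
    norm_sub_taylorWithinEval_le_of_norm_iteratedDeriv_sub_le zero_le_one hg hosc

end OneVariable

theorem taylor_remainder_path_bound_general (p k : ℕ) (η : ℝ) (hη : 0 < η)
    (F : EuclideanSpace ℝ (Fin p) → EuclideanSpace ℝ (Fin k))
    (hF : ContDiff ℝ (⌊η⌋₊ : ℕ) F)
    (hHol : ∀ x y, ‖iteratedFDeriv ℝ ⌊η⌋₊ F x - iteratedFDeriv ℝ ⌊η⌋₊ F y‖ ≤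
      ‖x - y‖ ^ (η - (⌊η⌋₊ : ℝ)))
    (x₁ x₂ : EuclideanSpace ℝ (Fin p))
    (γ γ' : ℝ → EuclideanSpace ℝ (Fin p))
    (hγ0 : γ 0 = x₂) (hγ1 : γ 1 = x₁)
    (hγderiv : ∀ t ∈ Set.Icc (0 : ℝ) 1, HasDerivAt γ (γ' t) t)
    (hγ'cont : ContinuousOn γ' (Set.Icc (0 : ℝ) 1)) :
    ‖F x₁ - ∑ i ∈ Finset.range (⌊η⌋₊ + 1),
        (i.factorial : ℝ)⁻¹ • iteratedFDeriv ℝ i F x₂ (fun _ => x₁ - x₂)‖ ≤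
      (∫ t in (0:ℝ)..1, ‖γ' t‖) ^ η := by
  set m := ⌊η⌋₊
  have hlen : ‖x₁ - x₂‖ ≤ ∫ t in (0:ℝ)..1, ‖γ' t‖ := by
    simpa only [hγ0, hγ1] using norm_sub_le_integral_norm_of_hasDerivAt zero_le_one hγderiv
      (hγ'cont.intervalIntegrable_of_Icc zero_le_one)
  have htaylor := norm_sub_taylor_le_of_norm_iteratedFDeriv_sub_le hF zero_le_one
    (sub_nonneg.2 (Nat.floor_le hη.le)) x₂ (fun z => (hHol z x₂).trans_eq (one_mul _).symm) x₁
  calc _ ≤ 1 * ‖x₁ - x₂‖ ^ (η - m) * ‖x₁ - x₂‖ ^ m / m ! := htaylor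
    _ ≤ ‖x₁ - x₂‖ ^ η := by
        rw [one_mul, ← Real.rpow_add_natCast' (norm_nonneg _) (by simpa using hη.ne'),
          sub_add_cancel]
        exact div_le_self (by positivity) (by exact_mod_cast m.factorial_pos)
    _ ≤ _ := Real.rpow_le_rpow (norm_nonneg _) hlen hη.le

/-- Taylor-remainder bound along a path: for an `⌊η⌋`-smooth map whose derivatives are
bounded by 1 and whose top derivative is `(η-⌊η⌋)`-Hölder with constant 1, the Taylor
remainder between two points is bounded by the length of any connecting path raised to
the power `η`. -/
theorem taylor_remainder_path_bound (p k : ℕ) (η : ℝ) (hη : 0 < η)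
    (F : EuclideanSpace ℝ (Fin p) → EuclideanSpace ℝ (Fin k))
    (hF : ContDiff ℝ (⌊η⌋₊ : ℕ) F)
    (hbd : ∀ i ≤ ⌊η⌋₊, ∀ x, ‖iteratedFDeriv ℝ i F x‖ ≤ 1)
    (hHol : ∀ x y, ‖iteratedFDeriv ℝ ⌊η⌋₊ F x - iteratedFDeriv ℝ ⌊η⌋₊ F y‖ ≤
      ‖x - y‖ ^ (η - (⌊η⌋₊ : ℝ)))
    (x₁ x₂ : EuclideanSpace ℝ (Fin p))
    (γ γ' : ℝ → EuclideanSpace ℝ (Fin p))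
    (hγ0 : γ 0 = x₂) (hγ1 : γ 1 = x₁)
    (hγderiv : ∀ t ∈ Set.Icc (0 : ℝ) 1, HasDerivAt γ (γ' t) t)
    (hγ'cont : ContinuousOn γ' (Set.Icc (0 : ℝ) 1)) :
    ‖F x₁ - ∑ i ∈ Finset.range (⌊η⌋₊ + 1),
        (i.factorial : ℝ)⁻¹ • iteratedFDeriv ℝ i F x₂ (fun _ => x₁ - x₂)‖ ≤
      (∫ t in (0:ℝ)..1, ‖γ' t‖) ^ η :=
  taylor_remainder_path_bound_general p k η hη F hF hHol x₁ x₂ γ γ' hγ0 hγ1 hγderiv hγ'cont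
end

section
/- Let K ≥ 1 and let g : ℝ^d → ℝ^p be twice continuously differentiable with ‖∇²g‖ ≤ K and ‖∇g(v)w‖ ≥ (2K)^{−1}‖w‖ for all v, w. Then for all u ≠ v, ‖g(u) − g(v)‖² / (2 · dist(g(u) − g(v), Im(∇g(v)))) ≥ (1/(8K³)) · (1 − K⁴(8‖u−v‖ + 4‖u−v‖²)), whenever dist(g(u) − g(v), Im(∇g(v))) > 0. In particular, if ‖u−v‖ ≤ (32 K⁴)^{−1}, this quotient is at least (16K³)^{−1}. -/
/-!
Write `r = ‖u - v‖`. Since `‖∇²g‖ ≤ K`, the first-order Taylor remainder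
`g u - g v - ∇g(v)(u - v)` has norm at most `K r²`. As `∇g(v)(u - v)` lies in `Im ∇g(v)`, this
bounds the distance to the tangent space by `K r²`, while the lower bound on `∇g(v)` gives
`‖g u - g v‖ ≥ r / (2K) - K r²`. Dividing, the quotient is at least `(1 - 2K²r)² / (8K³)`
whenever `2K²r ≤ 1`, and the claimed bound is negative otherwise.
-/

open Metric Set

section

variable {E F : Type*} [NormedAddCommGroup E] [NormedSpace ℝ E]
  [NormedAddCommGroup F] [NormedSpace ℝ F] {g : E → F} {K : ℝ}

theorem norm_fderiv_fderiv_eq_norm_iteratedFDeriv_two (g : E → F) (x : E) :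
    ‖fderiv ℝ (fderiv ℝ g) x‖ = ‖iteratedFDeriv ℝ 2 g x‖ := by
  rw [← norm_iteratedFDeriv_one, norm_iteratedFDeriv_fderiv]

theorem norm_fderiv_sub_fderiv_le_of_norm_iteratedFDeriv_two_le (hg : ContDiff ℝ 2 g)
    (h2 : ∀ x, ‖iteratedFDeriv ℝ 2 g x‖ ≤ K) (x y : E) :
    ‖fderiv ℝ g x - fderiv ℝ g y‖ ≤ K * ‖x - y‖ :=
  convex_univ.norm_image_sub_le_of_norm_fderiv_le
    (fun z _ => (hg.fderiv_right le_rfl).differentiable one_ne_zero z)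
    (fun z _ => (norm_fderiv_fderiv_eq_norm_iteratedFDeriv_two g z).trans_le (h2 z))
    (mem_univ y) (mem_univ x)

theorem norm_sub_sub_fderiv_le_of_norm_iteratedFDeriv_two_le (hg : ContDiff ℝ 2 g)
    (h2 : ∀ x, ‖iteratedFDeriv ℝ 2 g x‖ ≤ K) (u v : E) :
    ‖g u - g v - fderiv ℝ g v (u - v)‖ ≤ K * ‖u - v‖ ^ 2 := by
  have hK : 0 ≤ K := (norm_nonneg _).trans (h2 u)
  have hbound : ∀ x ∈ closedBall v ‖u - v‖, ‖fderiv ℝ g x - fderiv ℝ g v‖ ≤ K * ‖u - v‖ :=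
    fun x hx => (norm_fderiv_sub_fderiv_le_of_norm_iteratedFDeriv_two_le hg h2 x v).trans
      (mul_le_mul_of_nonneg_left (mem_closedBall_iff_norm.mp hx) hK)
  calc ‖g u - g v - fderiv ℝ g v (u - v)‖ ≤ K * ‖u - v‖ * ‖u - v‖ :=
        (convex_closedBall v _).norm_image_sub_le_of_norm_fderiv_le'
          (fun x _ => hg.differentiable two_ne_zero x) hbound
          (mem_closedBall_self (norm_nonneg _)) (mem_closedBall_iff_norm.mpr le_rfl)
    _ = K * ‖u - v‖ ^ 2 := by ring

theorem infDist_range_le_norm_sub_apply (x : F) (T : E →L[ℝ] F) (w : E) :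
    infDist x (LinearMap.range (T : E →ₗ[ℝ] F) : Set F) ≤ ‖x - T w‖ :=
  (infDist_le_dist_of_mem (LinearMap.mem_range_self _ w)).trans_eq (dist_eq_norm _ _)

end

theorem reach_bound_le_sq_div {K r N D : ℝ} (hK : 1 ≤ K) (hr : 0 ≤ r) (hD : 0 < D)
    (hDr : D ≤ K * r ^ 2) (hN : (2 * K)⁻¹ * r - K * r ^ 2 ≤ N) :
    1 / (8 * K ^ 3) * (1 - K ^ 4 * (8 * r + 4 * r ^ 2)) ≤ N ^ 2 / (2 * D) := by
  have hK0 : 0 < K := by linarith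
  rcases le_or_gt (2 * K ^ 2 * r) 1 with hsmall | hlarge
  · have hr0 : r ≠ 0 := by
      rintro rfl
      linarith [hDr.trans_eq (by ring : K * (0 : ℝ) ^ 2 = 0)]
    have hM : 0 ≤ (2 * K)⁻¹ * r - K * r ^ 2 := by
      have : (2 * K)⁻¹ * r - K * r ^ 2 = (2 * K)⁻¹ * r * (1 - 2 * K ^ 2 * r) := by
        field_simp
      rw [this]; exact mul_nonneg (by positivity) (by linarith)
    calc 1 / (8 * K ^ 3) * (1 - K ^ 4 * (8 * r + 4 * r ^ 2))
        ≤ (1 - 2 * K ^ 2 * r) ^ 2 / (8 * K ^ 3) := by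
          rw [one_div_mul_eq_div]
          gcongr
          have hK2 : 0 ≤ 2 * K ^ 2 - 1 := by nlinarith
          nlinarith [mul_nonneg (mul_nonneg hr (sq_nonneg K)) hK2,
            mul_nonneg (sq_nonneg r) (pow_nonneg hK0.le 4)]
      _ = ((2 * K)⁻¹ * r - K * r ^ 2) ^ 2 / (2 * (K * r ^ 2)) := by
          field_simp; ring
      _ ≤ N ^ 2 / (2 * (K * r ^ 2)) := by gcongr
      _ ≤ N ^ 2 / (2 * D) := by gcongr
  · calc 1 / (8 * K ^ 3) * (1 - K ^ 4 * (8 * r + 4 * r ^ 2)) ≤ 0 := by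
          refine mul_nonpos_of_nonneg_of_nonpos (by positivity) ?_
          nlinarith [one_le_pow₀ (n := 2) hK, one_le_pow₀ (n := 4) hK]
      _ ≤ N ^ 2 / (2 * D) := by positivity

theorem inv_sixteen_le_reach_bound {K r : ℝ} (hK : 1 ≤ K) (hr : 0 ≤ r)
    (h : r ≤ (32 * K ^ 4)⁻¹) :
    (16 * K ^ 3)⁻¹ ≤ 1 / (8 * K ^ 3) * (1 - K ^ 4 * (8 * r + 4 * r ^ 2)) := by
  have hK4 : 1 ≤ K ^ 4 := one_le_pow₀ hK
  have h32 : 32 * K ^ 4 * r ≤ 1 :=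
    calc 32 * K ^ 4 * r ≤ 32 * K ^ 4 * (32 * K ^ 4)⁻¹ := by gcongr
      _ = 1 := mul_inv_cancel₀ (by positivity)
  have hhalf : 1 / 2 ≤ 1 - K ^ 4 * (8 * r + 4 * r ^ 2) := by nlinarith
  calc (16 * K ^ 3)⁻¹ = 1 / (8 * K ^ 3) * (1 / 2) := by field_simp; ring
    _ ≤ 1 / (8 * K ^ 3) * (1 - K ^ 4 * (8 * r + 4 * r ^ 2)) := by gcongr

/-- Quantitative short-range lower bound on the Federer reach quotient
`‖g u - g v‖² / (2 dist(g u - g v, Im ∇g(v)))` for a map with bounded second derivative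
and smallest singular value of the differential bounded below by `(2K)⁻¹`. -/
theorem reach_quotient_lower_bound (d p : ℕ) (K : ℝ) (hK : 1 ≤ K)
    (g : EuclideanSpace ℝ (Fin d) → EuclideanSpace ℝ (Fin p))
    (hg : ContDiff ℝ 2 g)
    (h2 : ∀ u, ‖iteratedFDeriv ℝ 2 g u‖ ≤ K)
    (h1 : ∀ v (w : EuclideanSpace ℝ (Fin d)), (2 * K)⁻¹ * ‖w‖ ≤ ‖fderiv ℝ g v w‖) :
    ∀ u v, u ≠ v →
      0 < infDist (g u - g v)
          (LinearMap.range (fderiv ℝ g v : EuclideanSpace ℝ (Fin d) →ₗ[ℝ] EuclideanSpace ℝ (Fin p)) : Set (EuclideanSpace ℝ (Fin p))) →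
      (1 / (8 * K ^ 3)) * (1 - K ^ 4 * (8 * ‖u - v‖ + 4 * ‖u - v‖ ^ 2)) ≤
          ‖g u - g v‖ ^ 2 /
            (2 * infDist (g u - g v)
              (LinearMap.range (fderiv ℝ g v : EuclideanSpace ℝ (Fin d) →ₗ[ℝ] EuclideanSpace ℝ (Fin p)) : Set (EuclideanSpace ℝ (Fin p)))) ∧
        (‖u - v‖ ≤ (32 * K ^ 4)⁻¹ →
          (16 * K ^ 3)⁻¹ ≤
            ‖g u - g v‖ ^ 2 /
              (2 * infDist (g u - g v)
                (LinearMap.range (fderiv ℝ g v : EuclideanSpace ℝ (Fin d) →ₗ[ℝ] EuclideanSpace ℝ (Fin p)) : Set (EuclideanSpace ℝ (Fin p))))) := by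
  intro u v _ hD
  have hrem := norm_sub_sub_fderiv_le_of_norm_iteratedFDeriv_two_le hg h2 u v
  have hdist := (infDist_range_le_norm_sub_apply (g u - g v) (fderiv ℝ g v) (u - v)).trans hrem
  have hnorm : (2 * K)⁻¹ * ‖u - v‖ - K * ‖u - v‖ ^ 2 ≤ ‖g u - g v‖ := by
    have htri := norm_sub_norm_le (fderiv ℝ g v (u - v)) (g u - g v)
    rw [norm_sub_rev (fderiv ℝ g v (u - v))] at htri
    linarith [h1 v (u - v)]
  have hbound := reach_bound_le_sq_div hK (norm_nonneg _) hD hdist hnorm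
  exact ⟨hbound, fun hsmall =>
    (inv_sixteen_le_reach_bound hK (norm_nonneg _) hsmall).trans hbound⟩
end

section
/- Let K, K₂ > 0 and let g : 𝕋^d → ℝ^p be an injective C² map with ‖∇²g‖ ≤ K and ‖∇g(u)w‖ ≥ K₂^{−1}‖w‖ for all u, w, whose image M = g(𝕋^d) is a d-dimensional C² submanifold. Define R(g) = inf_{q ≠ p ∈ M} ‖q−p‖² / (2·dist(q−p, T_p M)). Suppose there exist δ ∈ (0, (2K₂K)^{−1}) and points u*, v* ∈ 𝕋^d with ‖u* − v*‖ ≥ δ and ‖g(u*) − g(v*)‖ < K₂^{−1}δ − Kδ². Then R(g) ≤ ‖g(u*) − g(v*)‖ / 2. -/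
/-!
Minimize `‖g a - g b‖` over pairs at torus distance at least `δ`; by periodicity a minimizer
`(x, y)` exists in a compact fundamental domain. The Taylor lower bound `K₂⁻¹ r - K r²` is
increasing for `r ≤ (2K₂K)⁻¹`, so no lattice translate of `x - y` can lie in the band
`[δ, (2K₂K)⁻¹)` without `‖g x - g y‖` exceeding `‖g u* - g v*‖`. Hence the constraint is inactive
near `y`, `y` locally minimizes `b ↦ ‖g x - g b‖`, and `g x - g y` is orthogonal to the tangent
space at `g y`. Its distance to that space is then `‖g x - g y‖`, and the pair `(x, y)` contributes
the quotient `‖g x - g y‖ / 2 ≤ ‖g u* - g v*‖ / 2`.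
-/

open Metric

noncomputable def latticeVec (d : ℕ) (k : Fin d → ℤ) : EuclideanSpace ℝ (Fin d) :=
  (WithLp.equiv 2 (Fin d → ℝ)).symm (fun i => (k i : ℝ))

section Lattice

variable {d : ℕ}

lemma latticeVec_add (m n : Fin d → ℤ) :
    latticeVec d (m + n) = latticeVec d m + latticeVec d n := by
  ext i; simp [latticeVec]

lemma latticeVec_sub (m n : Fin d → ℤ) :
    latticeVec d (m - n) = latticeVec d m - latticeVec d n := by
  ext i; simp [latticeVec]

lemma exists_norm_sub_latticeVec_le (u : EuclideanSpace ℝ (Fin d)) :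
    ∃ k : Fin d → ℤ, ‖u - latticeVec d k‖ ≤ √d := by
  refine ⟨fun i => ⌊u i⌋, ?_⟩
  rw [EuclideanSpace.norm_eq]
  refine Real.sqrt_le_sqrt ((Finset.sum_le_sum fun i _ => ?_).trans_eq
    (by simp : ∑ _i : Fin d, (1 : ℝ) = d))
  have hfract : ‖(u - latticeVec d fun i => ⌊u i⌋) i‖ = Int.fract (u i) := by
    simp [latticeVec, ← Int.self_sub_floor, Int.floor_le]
  rw [hfract]
  nlinarith [Int.fract_nonneg (u i), Int.fract_lt_one (u i)]

variable (d) in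
/-- `{(u, v) | δ ≤ torusDist u v}`, written without the infimum so that closedness is evident. -/
def farPairs (δ : ℝ) : Set (EuclideanSpace ℝ (Fin d) × EuclideanSpace ℝ (Fin d)) :=
  {z | ∀ k, δ ≤ ‖z.1 - z.2 - latticeVec d k‖}

lemma mem_farPairs_of_le_torusDist {δ : ℝ} {u v : EuclideanSpace ℝ (Fin d)}
    (h : δ ≤ torusDist u v) : (u, v) ∈ farPairs d δ := fun k =>
  h.trans (ciInf_le ⟨0, by rintro r ⟨k', rfl⟩; exact norm_nonneg _⟩ k)

lemma isClosed_farPairs (δ : ℝ) : IsClosed (farPairs d δ) := by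
  simp only [farPairs, Set.ofPred_forall]
  exact isClosed_iInter fun _ => isClosed_le continuous_const
    ((continuous_fst.sub continuous_snd).sub continuous_const).norm

lemma sub_latticeVec_mem_farPairs {δ : ℝ} {a b : EuclideanSpace ℝ (Fin d)}
    (h : (a, b) ∈ farPairs d δ) (ka kb : Fin d → ℤ) :
    (a - latticeVec d ka, b - latticeVec d kb) ∈ farPairs d δ := fun k => by
  have hshift : a - latticeVec d ka - (b - latticeVec d kb) - latticeVec d k
      = a - b - latticeVec d (ka - kb + k) := by
    rw [latticeVec_add, latticeVec_sub]; abel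
  simpa only [hshift] using h (ka - kb + k)

lemma apply_sub_latticeVec {F : Type*} {g : EuclideanSpace ℝ (Fin d) → F}
    (hper : ∀ k x, g (x + latticeVec d k) = g x) (k : Fin d → ℤ) (x : EuclideanSpace ℝ (Fin d)) :
    g (x - latticeVec d k) = g x := by
  simpa using (hper k (x - latticeVec d k)).symm

end Lattice

/-- By periodicity it suffices to minimize over the compact set of far pairs in a
fundamental domain. -/
lemma exists_mem_farPairs_forall_norm_sub_le {d : ℕ} {F : Type*} [NormedAddCommGroup F]
    {g : EuclideanSpace ℝ (Fin d) → F} (hg : Continuous g)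
    (hper : ∀ k x, g (x + latticeVec d k) = g x) {δ : ℝ} (hne : (farPairs d δ).Nonempty) :
    ∃ x y, (x, y) ∈ farPairs d δ ∧ ∀ a b, (a, b) ∈ farPairs d δ → ‖g x - g y‖ ≤ ‖g a - g b‖ := by
  have reduce : ∀ z ∈ farPairs d δ, ∃ z' ∈ (closedBall 0 √d ×ˢ closedBall 0 √d) ∩ farPairs d δ,
      g z'.1 = g z.1 ∧ g z'.2 = g z.2 := by
    rintro ⟨a, b⟩ hab
    obtain ⟨ka, hka⟩ := exists_norm_sub_latticeVec_le a
    obtain ⟨kb, hkb⟩ := exists_norm_sub_latticeVec_le b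
    refine ⟨(a - latticeVec d ka, b - latticeVec d kb),
      ⟨?_, sub_latticeVec_mem_farPairs hab ka kb⟩,
      apply_sub_latticeVec hper ka a, apply_sub_latticeVec hper kb b⟩
    simpa [mem_closedBall_iff_norm] using And.intro hka hkb
  have hcpt : IsCompact ((closedBall 0 √d ×ˢ closedBall 0 √d) ∩ farPairs d δ) :=
    ((isCompact_closedBall _ _).prod (isCompact_closedBall _ _)).inter_right (isClosed_farPairs δ)
  obtain ⟨z₀, hz₀⟩ := hne
  obtain ⟨z₀', hz₀', -⟩ := reduce z₀ hz₀
  obtain ⟨⟨x, y⟩, hxy, hmin⟩ := hcpt.exists_isMinOn ⟨z₀', hz₀'⟩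
    (((hg.comp continuous_fst).sub (hg.comp continuous_snd)).norm.continuousOn)
  refine ⟨x, y, hxy.2, fun a b hab => ?_⟩
  obtain ⟨w', hw', h₁, h₂⟩ := reduce (a, b) hab
  simpa [h₁, h₂] using hmin hw'

section Calculus

variable {E G : Type*} [NormedAddCommGroup E] [NormedSpace ℝ E]
  [NormedAddCommGroup G] [NormedSpace ℝ G] {g : E → G} {K : ℝ}

lemma norm_fderiv_sub_fderiv_le (hg : ContDiff ℝ 2 g)
    (h2 : ∀ u, ‖iteratedFDeriv ℝ 2 g u‖ ≤ K) (u v : E) :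
    ‖fderiv ℝ g u - fderiv ℝ g v‖ ≤ K * ‖u - v‖ := by
  have hbound : ∀ x, ‖fderiv ℝ (fderiv ℝ g) x‖ ≤ K := fun x => by
    rw [← norm_iteratedFDeriv_one, norm_iteratedFDeriv_fderiv]; exact h2 x
  have hdiff : Differentiable ℝ (fderiv ℝ g) :=
    (hg.fderiv_right (m := 1) le_rfl).differentiable one_ne_zero
  exact convex_univ.norm_image_sub_le_of_norm_fderiv_le (fun x _ => hdiff x)
    (fun x _ => hbound x) (Set.mem_univ v) (Set.mem_univ u)

lemma norm_sub_sub_fderiv_le (hg : ContDiff ℝ 2 g) (hK : 0 ≤ K)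
    (h2 : ∀ u, ‖iteratedFDeriv ℝ 2 g u‖ ≤ K) (a b : E) :
    ‖g a - g b - fderiv ℝ g b (a - b)‖ ≤ K * ‖a - b‖ ^ 2 := by
  have h := (convex_closedBall b ‖a - b‖).norm_image_sub_le_of_norm_fderiv_le'
    (fun x _ => (hg.differentiable two_ne_zero).differentiableAt)
    (fun x hx => (norm_fderiv_sub_fderiv_le hg h2 x b).trans
      (mul_le_mul_of_nonneg_left (mem_closedBall_iff_norm.mp hx) hK))
    (mem_closedBall_self (norm_nonneg _)) (by rw [mem_closedBall_iff_norm])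
  linarith

lemma mul_norm_sub_sub_mul_sq_le_norm_sub (hg : ContDiff ℝ 2 g) (hK : 0 ≤ K)
    (h2 : ∀ u, ‖iteratedFDeriv ℝ 2 g u‖ ≤ K) {c : ℝ} (h1 : ∀ u w, c * ‖w‖ ≤ ‖fderiv ℝ g u w‖)
    (a b : E) : c * ‖a - b‖ - K * ‖a - b‖ ^ 2 ≤ ‖g a - g b‖ := by
  have htriangle := norm_sub_norm_le (fderiv ℝ g b (a - b)) (g a - g b)
  rw [← norm_neg (fderiv ℝ g b (a - b) - (g a - g b)), neg_sub] at htriangle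
  linarith [h1 b (a - b), norm_sub_sub_fderiv_le hg hK h2 a b]

end Calculus

section Orthogonal

variable {E F : Type*} [NormedAddCommGroup E] [NormedSpace ℝ E]
  [NormedAddCommGroup F] [InnerProductSpace ℝ F]

lemma sub_mem_orthogonal_range_fderiv_of_isLocalMin {g : E → F} {c : F} {y : E}
    (hg : DifferentiableAt ℝ g y) (hmin : IsLocalMin (fun b => ‖c - g b‖) y) :
    c - g y ∈ (LinearMap.range (fderiv ℝ g y : E →ₗ[ℝ] F))ᗮ := by
  have hsq : IsLocalMin (fun b => ‖c - g b‖ ^ 2) y := by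
    filter_upwards [hmin] with b hb using pow_le_pow_left₀ (norm_nonneg _) hb 2
  have hzero := hsq.hasFDerivAt_eq_zero (hg.hasFDerivAt.const_sub c).norm_sq
  rw [Submodule.mem_orthogonal']
  rintro _ ⟨w, rfl⟩
  have h := DFunLike.congr_fun hzero w
  simp only [ContinuousLinearMap.comp_neg, smul_apply, neg_apply, ContinuousLinearMap.comp_apply,
    coe_innerSL_apply, nsmul_eq_mul, Nat.cast_ofNat, zero_apply] at h
  change inner ℝ (c - g y) (fderiv ℝ g y w) = 0
  linarith

lemma infDist_eq_norm_of_mem_orthogonal {W : Submodule ℝ F} {v : F} (hv : v ∈ Wᗮ) :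
    infDist v W = ‖v‖ := by
  have h := (W.norm_eq_iInf_iff_real_inner_eq_zero W.zero_mem).2
    (by simpa using (Submodule.mem_orthogonal' W v).1 hv)
  rw [infDist_eq_iInf]
  simpa [dist_eq_norm] using h.symm

end Orthogonal

section Reach

variable {E F : Type*} [NormedAddCommGroup E] [NormedSpace ℝ E]
  [NormedAddCommGroup F] [InnerProductSpace ℝ F]

/-- The quotients `‖q - p‖² / (2 dist(q - p, T_p M))` over `p ≠ q` in `M = range g`, whose
infimum is the reach of `M`. -/
def reachQuotients (g : E → F) : Set ℝ :=
  {r | ∃ u v, g u ≠ g v ∧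
    r = ‖g u - g v‖ ^ 2 / (2 * infDist (g u - g v) (LinearMap.range (fderiv ℝ g v : E →ₗ[ℝ] F)))}

lemma sInf_reachQuotients_le {g : E → F} {x y : E} (hne : g x ≠ g y)
    (horth : g x - g y ∈ (LinearMap.range (fderiv ℝ g y : E →ₗ[ℝ] F))ᗮ) :
    sInf (reachQuotients g) ≤ ‖g x - g y‖ / 2 := by
  refine csInf_le ⟨0, ?_⟩ ⟨x, y, hne, ?_⟩
  · rintro r ⟨u, v, -, rfl⟩
    have := infDist_nonneg (x := g u - g v)
      (s := (LinearMap.range (fderiv ℝ g v : E →ₗ[ℝ] F) : Set F))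
    positivity
  · have hpos : 0 < ‖g x - g y‖ := norm_pos_iff.2 (sub_ne_zero.2 hne)
    rw [infDist_eq_norm_of_mem_orthogonal horth]
    field_simp

end Reach

lemma sub_mul_sq_le_sub_mul_sq {c K δ r : ℝ} (hδr : δ ≤ r)
    (hsum : K * (δ + r) ≤ c) : c * δ - K * δ ^ 2 ≤ c * r - K * r ^ 2 := by
  nlinarith [mul_nonneg (sub_nonneg.2 hδr) (sub_nonneg.2 hsum)]

section Minimizer

variable {d : ℕ} {F : Type*} {g : EuclideanSpace ℝ (Fin d) → F}
  {δ : ℝ} {x y : EuclideanSpace ℝ (Fin d)}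

lemma apply_ne_of_mem_farPairs
    (hinj : ∀ u v, g u = g v → ∃ k, u - v = latticeVec d k) (hδ : 0 < δ)
    (hxy : (x, y) ∈ farPairs d δ) : g x ≠ g y := by
  intro heq
  obtain ⟨k, hk⟩ := hinj x y heq
  have h := hxy k
  rw [hk, sub_self, norm_zero] at h
  linarith

/-- Below scale `(2K₂K)⁻¹` the Taylor lower bound `K₂⁻¹r - Kr²` increases with `r`, so a pair
that is `δ`-far but has images closer than `K₂⁻¹δ - Kδ²` must be `(2K₂K)⁻¹`-far. -/
lemma inv_le_norm_sub_latticeVec_of_norm_sub_lt [NormedAddCommGroup F] [NormedSpace ℝ F]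
    {K K₂ : ℝ} (hK : 0 < K) (hK₂ : 0 < K₂) (hg : ContDiff ℝ 2 g)
    (h2 : ∀ u, ‖iteratedFDeriv ℝ 2 g u‖ ≤ K) (h1 : ∀ u w, K₂⁻¹ * ‖w‖ ≤ ‖fderiv ℝ g u w‖)
    (hper : ∀ k x, g (x + latticeVec d k) = g x) (hδ : δ < (2 * K₂ * K)⁻¹)
    (hxy : (x, y) ∈ farPairs d δ) (hclose : ‖g x - g y‖ < K₂⁻¹ * δ - K * δ ^ 2)
    (k : Fin d → ℤ) : (2 * K₂ * K)⁻¹ ≤ ‖x - y - latticeVec d k‖ := by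
  by_contra! hlt
  have hlower := mul_norm_sub_sub_mul_sq_le_norm_sub hg hK.le h2 h1 (x - latticeVec d k) y
  rw [apply_sub_latticeVec hper, sub_right_comm] at hlower
  have hsum : K * (δ + ‖x - y - latticeVec d k‖) ≤ K₂⁻¹ := by
    have h2ρ : K * (2 * (2 * K₂ * K)⁻¹) = K₂⁻¹ := by field_simp
    nlinarith
  linarith [sub_mul_sq_le_sub_mul_sq (hxy k) hsum]

lemma isLocalMin_norm_sub_of_forall_mem_farPairs [NormedAddCommGroup F]
    (hmin : ∀ a b, (a, b) ∈ farPairs d δ → ‖g x - g y‖ ≤ ‖g a - g b‖) {ρ : ℝ} (hδρ : δ < ρ)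
    (hsep : ∀ k, ρ ≤ ‖x - y - latticeVec d k‖) : IsLocalMin (fun b => ‖g x - g b‖) y := by
  filter_upwards [ball_mem_nhds y (sub_pos.2 hδρ)] with b hb
  have hfar : (x, b) ∈ farPairs d δ := fun k => by
    have htriangle : ‖x - y - latticeVec d k‖ ≤ ‖x - b - latticeVec d k‖ + ‖b - y‖ := by
      have hsplit : x - y - latticeVec d k = (x - b - latticeVec d k) + (b - y) := by abel
      exact hsplit ▸ norm_add_le _ _
    linarith [hsep k, mem_ball_iff_norm.1 hb]
  exact hmin x b hfar

end Minimizer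

/-- Upper bound on the reach (via Federer's characterization through the tangent-space
quotient) of the image of a periodic immersion `g` from two far apart points of the
torus with nearby images. -/
theorem reach_upper_bound_from_close_far_points (d p : ℕ) (K K₂ : ℝ)
    (hK : 0 < K) (hK₂ : 0 < K₂)
    (g : EuclideanSpace ℝ (Fin d) → EuclideanSpace ℝ (Fin p))
    (hper : ∀ (k : Fin d → ℤ) (x : EuclideanSpace ℝ (Fin d)),
      g (x + (WithLp.equiv 2 (Fin d → ℝ)).symm (fun i => (k i : ℝ))) = g x)
    (hinj : ∀ u v, g u = g v →
      ∃ k : Fin d → ℤ, u - v = (WithLp.equiv 2 (Fin d → ℝ)).symm (fun i => (k i : ℝ)))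
    (hg : ContDiff ℝ 2 g)
    (h2 : ∀ u, ‖iteratedFDeriv ℝ 2 g u‖ ≤ K)
    (h1 : ∀ u (w : EuclideanSpace ℝ (Fin d)), K₂⁻¹ * ‖w‖ ≤ ‖fderiv ℝ g u w‖)
    (δ : ℝ) (hδ0 : 0 < δ) (hδ1 : δ < (2 * K₂ * K)⁻¹)
    (us vs : EuclideanSpace ℝ (Fin d))
    (hfar : δ ≤ torusDist us vs)
    (hclose : ‖g us - g vs‖ < K₂⁻¹ * δ - K * δ ^ 2) :
    sInf {r : ℝ | ∃ u v, g u ≠ g v ∧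
        r = ‖g u - g v‖ ^ 2 /
          (2 * infDist (g u - g v)
            (LinearMap.range (fderiv ℝ g v : EuclideanSpace ℝ (Fin d) →ₗ[ℝ] EuclideanSpace ℝ (Fin p)) :
              Set (EuclideanSpace ℝ (Fin p))))}
      ≤ ‖g us - g vs‖ / 2 := by
  have hfar' := mem_farPairs_of_le_torusDist hfar
  obtain ⟨x, y, hxy, hmin⟩ :=
    exists_mem_farPairs_forall_norm_sub_le hg.continuous hper ⟨_, hfar'⟩
  have hle : ‖g x - g y‖ ≤ ‖g us - g vs‖ := hmin us vs hfar'
  have hsep := inv_le_norm_sub_latticeVec_of_norm_sub_lt hK hK₂ hg h2 h1 hper hδ1 hxy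
    (hle.trans_lt hclose)
  have horth := sub_mem_orthogonal_range_fderiv_of_isLocalMin
    (hg.differentiable two_ne_zero y) (isLocalMin_norm_sub_of_forall_mem_farPairs hmin hδ1 hsep)
  calc sInf (reachQuotients g)
      ≤ ‖g x - g y‖ / 2 := sInf_reachQuotients_le (apply_ne_of_mem_farPairs hinj hδ0 hxy) horth
    _ ≤ ‖g us - g vs‖ / 2 := by linarith
end
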